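/- Let ℓ: Σᵢ aᵢxᵢ ≤ k be a true literal under α, let op1 change variable v1 (appearing in ℓ) so that ℓ becomes false, and let v2 be another variable appearing in ℓ with nonzero coefficient. Then there exists an integer value val2 for v2 such that after simultaneously performing op1 and assigning v2 := val2, the literal ℓ is true (i.e., a compensating operation for ℓ always exists). -/

import Mathlib

/-! Replacing the value of `v2` by `x` shifts the left-hand side by `a v2 * (x - β v2)`, where
`β` is the assignment after `op1`. Since `a v2` is a nonzero integer, `(a v2)² ≥ 1`, so the
value `x = β v2 - a v2 * |S - k|` (with `S` the left-hand side under `β`) lowers it by at least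
`|S - k|`, which brings it to at most `k`. -/

theorem sum_mul_update_eq {ι R : Type*} [Fintype ι] [DecidableEq ι] [CommRing R]
    (a f : ι → R) (v : ι) (x : R) :
    ∑ i, a i * Function.update f v x i = ∑ i, a i * f i + a v * (x - f v) := by
  have hmul : (fun i ↦ a i * Function.update f v x i) = Function.update (a * f) v (a v * x) := by
    ext i
    rcases eq_or_ne i v with rfl | hi <;> simp [*]
  rw [hmul, Finset.sum_update_of_mem (Finset.mem_univ v), Finset.sdiff_singleton_eq_erase,
    ← Finset.add_sum_erase _ _ (Finset.mem_univ v)]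
  simp only [Pi.mul_apply]
  ring

theorem exists_sum_mul_update_le {ι : Type*} [Fintype ι] [DecidableEq ι]
    (a f : ι → ℤ) (k : ℤ) {v : ι} (hv : a v ≠ 0) :
    ∃ x, ∑ i, a i * Function.update f v x i ≤ k := by
  set S := ∑ i, a i * f i
  refine ⟨f v - a v * |S - k|, ?_⟩
  have hsq : 1 ≤ a v * a v := by
    nlinarith [Int.one_le_abs hv, abs_mul_abs_self (a v)]
  rw [sum_mul_update_eq]
  nlinarith [le_abs_self (S - k), abs_nonneg (S - k)]

theorem stmt_10_general {n : ℕ} (a : Fin n → ℤ) (k : ℤ) (α : Fin n → ℤ)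
    (v1 v2 : Fin n) (ha2 : a v2 ≠ 0) (val1 : ℤ) :
    ∃ val2 : ℤ,
      (∑ i, a i * Function.update (Function.update α v1 val1) v2 val2 i)
        ≤ k :=
  exists_sum_mul_update_le a _ k ha2

/-- If ℓ: Σ aᵢxᵢ ≤ k is true under α, op1 assigns v1 a new
value val1 making ℓ false, and v2 ≠ v1 appears in ℓ with nonzero coefficient,
then there is a value val2 for v2 such that simultaneously performing both
assignments makes ℓ true: a compensating operation always exists. -/
theorem stmt_10 {n : ℕ} (a : Fin n → ℤ) (k : ℤ) (α : Fin n → ℤ)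
    (v1 v2 : Fin n) (hne : v2 ≠ v1) (ha2 : a v2 ≠ 0) (val1 : ℤ)
    (htrue : (∑ i, a i * α i) ≤ k)
    (hfalse : ¬ (∑ i, a i * Function.update α v1 val1 i) ≤ k) :
    ∃ val2 : ℤ,
      (∑ i, a i * Function.update (Function.update α v1 val1) v2 val2 i)
        ≤ k :=
  stmt_10_general a k α v1 v2 ha2 val1
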